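/- Let N be a positive integer and let w : ZMod N → ℂ be nonzero. Let S = {x : ZMod N | |∑_y w(y)·conj(w(y − x))| = ‖w‖₂²}. Then S is an additive subgroup of ZMod N, and the indicator function 1_S satisfies |supp 1_S| · |supp 𝓕(1_S)| = N, i.e. 1_S is an extremal bi-partial isometry. (This is Corollary 3.12 of the paper — the spectral projection of |w ∗ R(w*)| at the value ‖w‖₂² is an extremal bi-partial isometry — specialized to L^∞(ℤ/Nℤ).) -/

import Mathlib

open Complex Finset

/-- The unitary discrete Fourier transform on `ZMod N`. -/
noncomputable def dft (N : ℕ) [NeZero N] (f : ZMod N → ℂ) : ZMod N → ℂ :=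
  fun k => (((N : ℝ) ^ (-(1/2 : ℝ)) : ℝ) : ℂ) *
    ∑ x : ZMod N, f x *
      Complex.exp (-2 * Real.pi * Complex.I * (k.val : ℂ) * (x.val : ℂ) / (N : ℂ))

/-- The `ℓ²` norm `‖f‖₂ = (∑ x, |f x|²)^(1/2)`. -/
noncomputable def l2norm (N : ℕ) [NeZero N] (f : ZMod N → ℂ) : ℝ :=
  Real.sqrt (∑ x : ZMod N, ‖f x‖ ^ 2)

/-!
The autocorrelation of `w` at `x` is the inner product of `w` with its translate by `x`, so by the
equality case of Cauchy–Schwarz it has modulus `‖w‖₂²` exactly when that translate is a unimodular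
multiple of `w`; these `x` form a subgroup `H`. By orthogonality of characters restricted to `H`,
the Fourier transform of `1_H` is supported on the annihilator `H^⊥`, and `|H| · |H^⊥| = N`
because, for a generator `g` of the cyclic group `H`, multiplication by `g` has kernel `H^⊥` and
image `H`.
-/

section PhasePeriods

variable {G 𝕜 : Type*} [AddGroup G] [NormedDivisionRing 𝕜]

def phasePeriods (w : G → 𝕜) : AddSubgroup G where
  carrier := {x | ∃ c : 𝕜, ‖c‖ = 1 ∧ ∀ y, w (y - x) = c * w y}
  zero_mem' := ⟨1, norm_one, fun y => by rw [sub_zero, one_mul]⟩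
  add_mem' := by
    rintro a b ⟨ca, hca_norm, hca⟩ ⟨cb, hcb_norm, hcb⟩
    refine ⟨ca * cb, by rw [norm_mul, hca_norm, hcb_norm, one_mul], fun y => ?_⟩
    rw [sub_add_eq_sub_sub_swap, hca, hcb, mul_assoc]
  neg_mem' := by
    rintro a ⟨c, hc_norm, hc⟩
    have hc0 : c ≠ 0 := norm_ne_zero_iff.1 (by rw [hc_norm]; exact one_ne_zero)
    refine ⟨c⁻¹, by rw [norm_inv, hc_norm, inv_one], fun y => ?_⟩
    rw [sub_neg_eq_add, eq_inv_mul_iff_mul_eq₀ hc0, ← hc, add_sub_cancel_right]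

lemma mem_phasePeriods {w : G → 𝕜} {x : G} :
    x ∈ phasePeriods w ↔ ∃ c : 𝕜, ‖c‖ = 1 ∧ ∀ y, w (y - x) = c * w y :=
  Iff.rfl

end PhasePeriods

lemma norm_inner_eq_norm_sq_iff {𝕜 E : Type*} [RCLike 𝕜] [NormedAddCommGroup E]
    [InnerProductSpace 𝕜 E] {u v : E} (hu : u ≠ 0) (huv : ‖v‖ = ‖u‖) :
    ‖inner 𝕜 u v‖ = ‖u‖ ^ 2 ↔ ∃ c : 𝕜, ‖c‖ = 1 ∧ v = c • u := by
  have hu_norm : ‖u‖ ≠ 0 := norm_ne_zero_iff.2 hu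
  have hv : v ≠ 0 := norm_ne_zero_iff.1 (huv ▸ hu_norm)
  rw [sq]
  nth_rewrite 2 [← huv]
  rw [norm_inner_eq_norm_iff hu hv]
  constructor
  · rintro ⟨r, -, rfl⟩
    rw [norm_smul] at huv
    exact ⟨r, (mul_eq_right₀ hu_norm).1 huv, rfl⟩
  · rintro ⟨c, hc, rfl⟩
    exact ⟨c, norm_ne_zero_iff.1 (hc ▸ one_ne_zero), rfl⟩

section Autocorrelation

variable {G 𝕜 : Type*} [AddGroup G] [Fintype G] [RCLike 𝕜]

lemma norm_autocorrelation_eq_iff {w : G → 𝕜} (hw : w ≠ 0) (x : G) :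
    ‖∑ y, w y * starRingEnd 𝕜 (w (y - x))‖ = ∑ y, ‖w y‖ ^ 2 ↔ x ∈ phasePeriods w := by
  set u : EuclideanSpace 𝕜 G := WithLp.toLp 2 w
  set v : EuclideanSpace 𝕜 G := WithLp.toLp 2 fun y => w (y - x)
  have hu : u ≠ 0 := fun h => hw (congrArg WithLp.ofLp h)
  have huv : ‖v‖ = ‖u‖ := by
    rw [← sq_eq_sq₀ (norm_nonneg _) (norm_nonneg _), EuclideanSpace.norm_sq_eq,
      EuclideanSpace.norm_sq_eq]
    exact Equiv.sum_comp (Equiv.subRight x) fun y => ‖w y‖ ^ 2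
  have h_inner : ∑ y, w y * starRingEnd 𝕜 (w (y - x)) = inner 𝕜 v u := by
    simp only [PiLp.inner_apply, RCLike.inner_apply]
    rfl
  have h_norm : ∑ y, ‖w y‖ ^ 2 = ‖u‖ ^ 2 := (EuclideanSpace.norm_sq_eq u).symm
  rw [h_inner, h_norm, norm_inner_symm, norm_inner_eq_norm_sq_iff hu huv, mem_phasePeriods]
  simp only [u, v, ← WithLp.toLp_smul, (WithLp.toLp_injective 2).eq_iff, funext_iff,
    Pi.smul_apply, smul_eq_mul]

end Autocorrelation

section ZModFourier

variable {N : ℕ} [NeZero N]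

lemma l2norm_sq (w : ZMod N → ℂ) : l2norm N w ^ 2 = ∑ x, ‖w x‖ ^ 2 :=
  Real.sq_sqrt (Finset.sum_nonneg fun _ _ => sq_nonneg _)

lemma exp_neg_two_pi_I_val_mul_val_eq_stdAddChar (k x : ZMod N) :
    Complex.exp (-2 * Real.pi * Complex.I * (k.val : ℂ) * (x.val : ℂ) / (N : ℂ)) =
      ZMod.stdAddChar (-(x * k)) := by
  have : -(x * k) = ((-(x.val * k.val : ℤ) : ℤ) : ZMod N) := by
    push_cast; simp only [ZMod.natCast_val, ZMod.cast_id', id_eq]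
  rw [this, ZMod.stdAddChar_coe]
  congr 1
  push_cast
  ring

lemma dft_eq_smul_zmod_dft (f : ZMod N → ℂ) :
    dft N f = (((N : ℝ) ^ (-(1 / 2 : ℝ)) : ℝ) : ℂ) • ZMod.dft f := by
  ext k
  rw [dft, Pi.smul_apply, ZMod.dft_apply, smul_eq_mul]
  congr 1
  refine Finset.sum_congr rfl fun x _ => ?_
  rw [exp_neg_two_pi_I_val_mul_val_eq_stdAddChar, mul_comm, smul_eq_mul]

lemma support_dft (f : ZMod N → ℂ) :
    Function.support (dft N f) = Function.support (ZMod.dft f) := by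
  have hN : (0 : ℝ) < N := Nat.cast_pos.2 (NeZero.pos N)
  rw [dft_eq_smul_zmod_dft, Function.support_const_smul_of_ne_zero]
  exact Complex.ofReal_ne_zero.2 (Real.rpow_pos_of_pos hN _).ne'

lemma support_zmod_dft_indicator_one (H : AddSubgroup (ZMod N)) :
    Function.support (ZMod.dft ((H : Set (ZMod N)).indicator fun _ => (1 : ℂ))) =
      {k | ∀ x ∈ H, x * k = 0} := by
  classical
  ext k
  let ψ : AddChar H ℂ :=
    ZMod.stdAddChar.compAddMonoidHom ((AddMonoidHom.mulRight (-k)).comp H.subtype)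
  have h_sum : ZMod.dft ((H : Set (ZMod N)).indicator fun _ => (1 : ℂ)) k = ∑ x, ψ x := by
    simp only [ZMod.dft_apply, Set.indicator_apply, smul_eq_mul, mul_ite, mul_one, mul_zero]
    rw [← Finset.sum_filter, Finset.sum_subtype (p := (· ∈ H)) (F := inferInstance) _ (by simp)]
    simp [ψ, mul_neg]
  have h_triv : ψ = 0 ↔ ∀ x ∈ H, x * k = 0 := by
    rw [AddChar.eq_zero_iff, Subtype.forall]
    refine forall₂_congr fun x _ => ?_
    rw [show ψ ⟨x, _⟩ = ZMod.stdAddChar (x * -k) from rfl,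
      ← (ZMod.stdAddChar (N := N)).map_zero_eq_one, ZMod.injective_stdAddChar.eq_iff, mul_neg,
      neg_eq_zero]
  rw [Function.mem_support, h_sum, AddChar.sum_ne_zero_iff_eq_zero, h_triv, Set.mem_ofPred_eq]

end ZModFourier

section ZModAnnihilator

variable {N : ℕ}

lemma ZMod.range_mulLeft (g : ZMod N) :
    (AddMonoidHom.mulLeft g).range = AddSubgroup.zmultiples g := by
  have h_top : AddSubgroup.zmultiples (1 : ZMod N) = ⊤ := by
    rw [← Int.range_castAddHom, AddMonoidHom.range_eq_top]
    exact ZMod.intCast_surjective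
  rw [AddMonoidHom.range_eq_map, ← h_top, AddMonoidHom.map_zmultiples, AddMonoidHom.coe_mulLeft,
    mul_one]

lemma card_mul_ncard_annihilator (H : AddSubgroup (ZMod N)) :
    Nat.card H * {k : ZMod N | ∀ x ∈ H, x * k = 0}.ncard = N := by
  obtain ⟨g, rfl⟩ := (AddSubgroup.isAddCyclic_iff_exists_zmultiples_eq_top H).1 inferInstance
  have h_ann : {k : ZMod N | ∀ x ∈ AddSubgroup.zmultiples g, x * k = 0} =
      (AddMonoidHom.mulLeft g).ker := by
    ext k
    simp only [Set.mem_ofPred_eq, SetLike.mem_coe, AddMonoidHom.mem_ker, AddMonoidHom.coe_mulLeft]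
    refine ⟨fun h => h g (AddSubgroup.mem_zmultiples g), ?_⟩
    rintro h _ ⟨n, rfl⟩
    rw [smul_mul_assoc, h, smul_zero]
  rw [h_ann, ← Nat.card_coe_set_eq, mul_comm, SetLike.coe_sort_coe, ← ZMod.range_mulLeft,
    ← AddSubgroup.index_ker, AddSubgroup.card_mul_index, Nat.card_zmod]

end ZModAnnihilator

/-- The set where the autocorrelation of a nonzero w attains its maximal value
‖w‖₂² is a subgroup of ZMod N, and its indicator function is an extremal
bi-partial isometry, i.e. a minimizer of the Donoho–Stark uncertainty principle. -/
theorem spectral_projection_extremal (N : ℕ) [NeZero N] (w : ZMod N → ℂ)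
    (hw : w ≠ 0) :
    (∃ H : AddSubgroup (ZMod N),
        {x : ZMod N | ‖∑ y : ZMod N, w y * (starRingEnd ℂ) (w (y - x))‖ =
          l2norm N w ^ 2} = (H : Set (ZMod N))) ∧
      (Function.support
          (Set.indicator {x : ZMod N |
            ‖∑ y : ZMod N, w y * (starRingEnd ℂ) (w (y - x))‖ =
              l2norm N w ^ 2} (fun _ => (1 : ℂ)))).ncard *
        (Function.support (dft N
          (Set.indicator {x : ZMod N |
            ‖∑ y : ZMod N, w y * (starRingEnd ℂ) (w (y - x))‖ =
              l2norm N w ^ 2} (fun _ => (1 : ℂ))))).ncard = N := by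
  have hS : {x : ZMod N | ‖∑ y : ZMod N, w y * (starRingEnd ℂ) (w (y - x))‖ =
      l2norm N w ^ 2} = (phasePeriods w : Set (ZMod N)) := by
    ext x
    rw [Set.mem_ofPred_eq, l2norm_sq]
    exact norm_autocorrelation_eq_iff hw x
  rw [hS]
  refine ⟨⟨phasePeriods w, rfl⟩, ?_⟩
  rw [Set.support_indicator, Function.support_const one_ne_zero, Set.inter_univ, support_dft,
    support_zmod_dft_indicator_one, ← Nat.card_coe_set_eq]
  exact card_mul_ncard_annihilator _
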